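/- Let (K,L) be a pair of simplicial complexes, i.e., L is a subcomplex of K. Then ν²(Sd(L)) ⊆ Sd(ν(L)) as subcomplexes of Sd(K), where ν denotes the neighborhood taken in Sd(K) on the left-hand side and in K on the right-hand side. -/

import Mathlib

/-- An abstract simplicial complex on the vertex type `V`: a family of finite subsets of `V`
closed under taking subsets. -/
structure Cplx (V : Type*) where
  faces : Set (Set V)
  finite_mem : ∀ σ ∈ faces, Set.Finite σ
  down_closed : ∀ σ ∈ faces, ∀ τ ⊆ σ, τ ∈ faces

/-- The vertex set of a simplicial complex. -/
def Cplx.verts {V : Type*} (K : Cplx V) : Set V := {v | ({v} : Set V) ∈ K.faces}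

/-- `a` is an action of the group `Γ` on the vertex type of `K` by simplicial automorphisms. -/
def IsCplxAction (Γ : Type*) [Group Γ] {V : Type*} (a : Γ → V → V) (K : Cplx V) : Prop :=
  (∀ v, a 1 v = v) ∧ (∀ γ γ' : Γ, ∀ v, a (γ * γ') v = a γ (a γ' v)) ∧
    ∀ γ : Γ, ∀ σ ∈ K.faces, (a γ) '' σ ∈ K.faces

/-- A simplicial multi-map from `K` to `L`: it assigns to each vertex of `K` a nonempty subset
of the vertices of `L`, so that `⋃ v ∈ σ, η v` is a simplex of `L` for every simplex `σ` of
`K`. -/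
def IsMultiMap {V W : Type*} (K : Cplx V) (L : Cplx W) (η : V → Set W) : Prop :=
  (∀ v ∈ K.verts, (η v).Nonempty) ∧ ∀ σ ∈ K.faces, (⋃ v ∈ σ, η v) ∈ L.faces

/-- A Γ-equivariant simplicial multi-map, i.e. an element of `Map_Γ(K, L)`. -/
def IsEquivMultiMap (Γ : Type*) [Group Γ] {V W : Type*} (a : Γ → V → V) (b : Γ → W → W)
    (K : Cplx V) (L : Cplx W) (η : V → Set W) : Prop :=
  IsMultiMap K L η ∧ ∀ γ : Γ, ∀ v ∈ K.verts, η (a γ v) = (b γ) '' (η v)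

/-- Pointwise order on multi-maps out of `K` (on the vertices of `K`). -/
def mmLE {V W : Type*} (K : Cplx V) (η η' : V → Set W) : Prop := ∀ v ∈ K.verts, η v ⊆ η' v

/-- An element of `Def_Γ(K, L)`: a Γ-equivariant simplicial multi-map `K → K` with
`η v = {v}` for every vertex `v` of the subcomplex `L`. -/
def IsDefMultiMap (Γ : Type*) [Group Γ] {V : Type*} (a : Γ → V → V) (K L : Cplx V)
    (η : V → Set V) : Prop :=
  IsEquivMultiMap Γ a a K K η ∧ ∀ v ∈ L.verts, η v = {v}

/-- One step of a zigzag in `Def_Γ(K, L)`: both multi-maps lie in `Def_Γ(K, L)` and they are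
comparable. -/
def cplxDefStep (Γ : Type*) [Group Γ] {V : Type*} (a : Γ → V → V) (K L : Cplx V)
    (η η' : V → Set V) : Prop :=
  IsDefMultiMap Γ a K L η ∧ IsDefMultiMap Γ a K L η' ∧ (mmLE K η η' ∨ mmLE K η' η)

/-- The Γ-simplicial complex `K` strongly Γ-collapses to its Γ-subcomplex `L`: there is a
simplicial map `f` belonging to the identity component of `Def_Γ(K, L)` (joined to the
identity by a finite zigzag of pairwise comparable elements) whose image is contained in
`L`. -/
def CplxCollapses (Γ : Type*) [Group Γ] {V : Type*} (a : Γ → V → V) (K L : Cplx V) : Prop :=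
  ∃ f : V → V, IsDefMultiMap Γ a K L (fun v => {f v}) ∧
    Relation.ReflTransGen (cplxDefStep Γ a K L) (fun v => {v}) (fun v => {f v}) ∧
    ∀ σ ∈ K.faces, f '' σ ∈ L.faces
/-- The face poset of `K`, realized as the set of nonempty simplices of `K` inside the poset
`Set V` (ordered by inclusion). -/
def facePoset {V : Type*} (K : Cplx V) : Set (Set V) := {σ | σ ∈ K.faces ∧ σ.Nonempty}

/-- The barycentric subdivision `Sd(K) = Δ(FK)`: the simplicial complex on the nonempty
simplices of `K` whose simplices are the finite chains of the face poset of `K`. -/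
def sd {V : Type*} (K : Cplx V) : Cplx (Set V) where
  faces := {c | c.Finite ∧ (∀ σ ∈ c, σ ∈ facePoset K) ∧ IsChain (· ⊆ ·) c}
  finite_mem := fun _ h => h.1
  down_closed := fun c hc d hdc =>
    ⟨hc.1.subset hdc, fun σ hσ => hc.2.1 σ (hdc hσ),
      by obtain ⟨-, -, h⟩ := hc; exact h.mono hdc⟩
/-- The neighborhood `ν_K(L) = ⋃_{v ∈ V(L)} st_K(v)` of the subcomplex `L` in `K`. -/
def nbhd {V : Type*} (K L : Cplx V) : Cplx V where
  faces := {σ | ∃ v ∈ L.verts, insert v σ ∈ K.faces}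
  finite_mem := fun σ h => by
    obtain ⟨v, -, h⟩ := h
    exact (K.finite_mem _ h).subset (Set.subset_insert _ _)
  down_closed := fun σ h τ hτσ => by
    obtain ⟨v, hv, h⟩ := h
    exact ⟨v, hv, K.down_closed _ h _ (Set.insert_subset_insert hτσ)⟩

/-- The iterated neighborhood `ν^r_K(L)` (with `ν^0_K(L) = L`). -/
def nbhdIter {V : Type*} (K L : Cplx V) : ℕ → Cplx V
  | 0 => L
  | r + 1 => nbhd K (nbhdIter K L r)

/-!
A vertex `τ` of `ν(Sd L)` is a simplex of `K` comparable with a simplex `σ` of `L`, so `τ`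
contains a vertex `v` of `L` (take `v ∈ σ ∩ τ`). Every simplex `ρ` of a chain in the star of `τ`
is comparable with `τ`, hence `ρ ∪ {v}` lies in the larger of `ρ` and `τ`; thus `ρ` lies in
`st_K(v) ⊆ ν(L)`, and the chain is a simplex of `Sd(ν(L))`.
-/

open Set

section

variable {V : Type*}

theorem Cplx.mem_verts_of_mem {K : Cplx V} {σ : Set V} (hσ : σ ∈ K.faces) {v : V}
    (hv : v ∈ σ) : v ∈ K.verts :=
  K.down_closed σ hσ {v} (singleton_subset_iff.2 hv)

theorem Cplx.insert_mem_faces_of_total {K : Cplx V} {ρ τ : Set V} (hρ : ρ ∈ K.faces)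
    (hτ : τ ∈ K.faces) {v : V} (hv : v ∈ τ) (hρτ : ρ ⊆ τ ∨ τ ⊆ ρ) : insert v ρ ∈ K.faces := by
  rcases hρτ with hρτ | hτρ
  · exact K.down_closed τ hτ _ (insert_subset hv hρτ)
  · rwa [insert_eq_of_mem (hτρ hv)]

theorem exists_mem_verts_of_mem_verts_nbhd_sd {K L : Cplx V} {τ : Set V}
    (hτ : τ ∈ (nbhd (sd K) (sd L)).verts) : ∃ v ∈ L.verts, v ∈ τ := by
  obtain ⟨σ, hσ, hστ⟩ := hτ
  have hσL : σ ∈ facePoset L := hσ.2.1 σ rfl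
  have hτK : τ ∈ facePoset K := hστ.2.1 τ (mem_insert_of_mem _ rfl)
  obtain ⟨v, hvσ, hvτ⟩ : (σ ∩ τ).Nonempty := by
    rcases hστ.2.2.total (mem_insert σ _) (mem_insert_of_mem σ rfl) with h | h
    · simpa [inter_eq_left.2 h] using hσL.2
    · simpa [inter_eq_right.2 h] using hτK.2
  exact ⟨v, Cplx.mem_verts_of_mem hσL.1 hvσ, hvτ⟩

theorem mem_faces_sd_nbhd_of_insert_mem_faces_sd {K L : Cplx V} {τ : Set V} {c : Set (Set V)}
    {v : V} (hv : v ∈ L.verts) (hvτ : v ∈ τ) (hc : insert τ c ∈ (sd K).faces) :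
    c ∈ (sd (nbhd K L)).faces := by
  refine ⟨hc.1.subset (subset_insert _ _), fun ρ hρ => ?_, hc.2.2.mono (subset_insert _ _)⟩
  have hρK : ρ ∈ facePoset K := hc.2.1 ρ (mem_insert_of_mem _ hρ)
  have hτK : τ ∈ facePoset K := hc.2.1 τ (mem_insert _ _)
  have hρτ : ρ ⊆ τ ∨ τ ⊆ ρ := hc.2.2.total (mem_insert_of_mem _ hρ) (mem_insert _ _)
  exact ⟨⟨v, hv, Cplx.insert_mem_faces_of_total hρK.1 hτK.1 hvτ hρτ⟩, hρK.2⟩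

end

theorem nbhd_sq_sd_subset_sd_nbhd_general {V : Type*} (K L : Cplx V) :
    (nbhdIter (sd K) (sd L) 2).faces ⊆ (sd (nbhd K L)).faces := by
  rintro c ⟨τ, hτ, hc⟩
  obtain ⟨v, hv, hvτ⟩ := exists_mem_verts_of_mem_verts_nbhd_sd hτ
  exact mem_faces_sd_nbhd_of_insert_mem_faces_sd hv hvτ hc

/-- Let (K,L) be a pair of simplicial complexes (L a subcomplex of K).  Then
ν²(Sd(L)) ⊆ Sd(ν(L)) as subcomplexes of Sd(K), where ν is taken in Sd(K) on the left and in K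
on the right. -/
theorem nbhd_sq_sd_subset_sd_nbhd {V : Type*} (K L : Cplx V) (hLK : L.faces ⊆ K.faces) :
    (nbhdIter (sd K) (sd L) 2).faces ⊆ (sd (nbhd K L)).faces :=
  nbhd_sq_sd_subset_sd_nbhd_general K L
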